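/- Let r>0 and d≥2. If A⊆ℝ^d is a nonempty compact set with 0 < cr(A) ≤ r, then the Minkowski difference identity A^r − conv_r(A) = B[0,r] holds; equivalently, A^r + (−conv_r(A)) = B[0,r], i.e., {x−y : x∈A^r, y∈conv_r(A)} = B[0,r]. -/

import Mathlib

open MeasureTheory Metric Pointwise

/-- Volume of the unit ball in `ℝ^m`. -/
noncomputable def ballVolume (m : ℕ) : ℝ :=
  (volume (closedBall (0 : EuclideanSpace ℝ (Fin m)) 1)).toReal

/-- The `k`-th intrinsic volume of a set in `ℝ^d`, defined via the Steiner formula: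
`vol(A + εB) = Σ_i ω_{d-i} V_i(A) ε^{d-i}`; the Steiner polynomial is recovered by
Lagrange interpolation of `ε ↦ vol(A + εB)` at `ε = 0, 1, …, d`. -/
noncomputable def intrinsicVolume (d k : ℕ) (A : Set (EuclideanSpace ℝ (Fin d))) : ℝ :=
  ((Lagrange.interpolate (Finset.range (d + 1)) (fun j => (j : ℝ)))
      (fun j =>
        (volume (A + closedBall (0 : EuclideanSpace ℝ (Fin d)) (j : ℝ))).toReal)).coeff
      (d - k) / ballVolume (d - k)

/-- The circumradius of a set. -/
noncomputable def circumradius {d : ℕ} (A : Set (EuclideanSpace ℝ (Fin d))) : ℝ :=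
  sInf {r : ℝ | 0 < r ∧ ∃ p, A ⊆ closedBall p r}

/-- The `r`-dual (`r`-ball body generated by `A`): `A^r = ⋂_{p ∈ A} B[p,r]`. -/
def rDual {d : ℕ} (r : ℝ) (A : Set (EuclideanSpace ℝ (Fin d))) : Set (EuclideanSpace ℝ (Fin d)) :=
  ⋂ p ∈ A, closedBall p r

/-- The `r`-ball convex hull: intersection of all closed balls of radius `r` containing `A`. -/
def rHull {d : ℕ} (r : ℝ) (A : Set (EuclideanSpace ℝ (Fin d))) : Set (EuclideanSpace ℝ (Fin d)) :=
  ⋂ p ∈ {p : EuclideanSpace ℝ (Fin d) | A ⊆ closedBall p r}, closedBall p r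

section AuxLemmas

variable {d : ℕ}
local notation "E" => EuclideanSpace ℝ (Fin d)

lemma mem_rDual_iff {r : ℝ} {A : Set E} {p : E} :
    p ∈ rDual r A ↔ A ⊆ closedBall p r := by
  simp only [rDual, Set.mem_iInter, mem_closedBall]
  constructor
  · intro h a ha; exact mem_closedBall.2 (by rw [dist_comm]; exact h a ha)
  · intro h a ha; rw [dist_comm]; exact mem_closedBall.1 (h ha)

lemma mem_rHull_iff {r : ℝ} {A : Set E} {y : E} :
    y ∈ rHull r A ↔ ∀ p : E, A ⊆ closedBall p r → y ∈ closedBall p r := by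
  simp [rHull]

lemma subset_rHull {r : ℝ} {A : Set E} : A ⊆ rHull r A := by
  intro a ha; rw [mem_rHull_iff]; intro p hp; exact hp ha

lemma rDual_nonempty {r : ℝ} (hr : 0 < r) {A : Set E} (hA : A.Nonempty)
    (hcr0 : 0 < circumradius A) (hcr : circumradius A ≤ r) :
    (rDual r A).Nonempty := by
  obtain ⟨a₀, ha₀⟩ := hA
  set S := {s : ℝ | 0 < s ∧ ∃ p, A ⊆ closedBall p s} with hS
  have hSne : S.Nonempty := by
    by_contra h
    rw [Set.not_nonempty_iff_eq_empty] at h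
    have : circumradius A = 0 := by rw [circumradius, ← hS, h, Real.sInf_empty]
    linarith
  set t : ℕ → Set E := fun n => ⋂ a ∈ A, closedBall a (r + ((n : ℝ) + 1)⁻¹) with ht
  have htc : ∀ n, IsClosed (t n) := fun n => isClosed_biInter fun a _ => Metric.isClosed_closedBall
  have htb : ∀ n, (t n).Nonempty := by
    intro n
    have hlt : sInf S < r + ((n : ℝ) + 1)⁻¹ := by
      have : (0:ℝ) < ((n : ℝ) + 1)⁻¹ := by positivity
      calc sInf S ≤ r := hcr
        _ < _ := by linarith
    obtain ⟨s, hsS, hslt⟩ := exists_lt_of_csInf_lt hSne hlt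
    obtain ⟨p, hp⟩ := hsS.2
    refine ⟨p, ?_⟩
    rw [ht]
    simp only [Set.mem_iInter, mem_closedBall]
    intro a ha
    rw [dist_comm]
    exact le_trans (mem_closedBall.1 (hp ha)) hslt.le
  have htanti : ∀ n, t (n + 1) ⊆ t n := by
    intro n
    apply Set.iInter₂_mono
    intro a _
    apply closedBall_subset_closedBall
    have : ((n : ℝ) + 1 + 1)⁻¹ ≤ ((n : ℝ) + 1)⁻¹ := by
      apply inv_anti₀ (by positivity) (by push_cast; linarith)
    push_cast
    linarith
  have ht0c : IsCompact (t 0) := by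
    have : t 0 ⊆ closedBall a₀ (r + 1) := by
      intro x hx
      rw [ht] at hx
      simp only [Set.mem_iInter, mem_closedBall] at hx
      have := hx a₀ ha₀
      rw [mem_closedBall]
      simpa using this
    exact (Metric.isBounded_closedBall.subset this).isCompact_closure.of_isClosed_subset (htc 0) subset_closure
  obtain ⟨x, hx⟩ := IsCompact.nonempty_iInter_of_sequence_nonempty_isCompact_isClosed t htanti htb ht0c htc
  refine ⟨x, ?_⟩
  rw [rDual]
  simp only [Set.mem_iInter, mem_closedBall]
  intro a ha
  have : ∀ n : ℕ, dist x a ≤ r + ((n : ℝ) + 1)⁻¹ := by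
    intro n
    have := Set.mem_iInter.1 hx n
    rw [ht] at this
    simp only [Set.mem_iInter, mem_closedBall] at this
    exact this a ha
  refine le_of_forall_pos_le_add fun ε hε => ?_
  obtain ⟨n, hn⟩ := exists_nat_one_div_lt hε
  have h2 := this n
  rw [one_div] at hn
  linarith

lemma rDual_isCompact {r : ℝ} {A : Set E} (hA : A.Nonempty) : IsCompact (rDual r A) := by
  obtain ⟨a₀, ha₀⟩ := hA
  have hcl : IsClosed (rDual r A) := isClosed_biInter fun a _ => Metric.isClosed_closedBall
  have hsub : rDual r A ⊆ closedBall a₀ r := by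
    intro x hx
    simp only [rDual, Set.mem_iInter] at hx
    exact hx a₀ ha₀
  exact ((isCompact_closedBall a₀ r).of_isClosed_subset hcl hsub)

lemma rHull_isCompact {r : ℝ} {A : Set E} (hRd : (rDual r A).Nonempty) :
    IsCompact (rHull r A) := by
  obtain ⟨p₀, hp₀⟩ := hRd
  have hcl : IsClosed (rHull r A) := isClosed_biInter fun p _ => Metric.isClosed_closedBall
  have hsub : rHull r A ⊆ closedBall p₀ r := fun y hy =>
    (mem_rHull_iff.1 hy) p₀ (mem_rDual_iff.1 hp₀)
  exact ((isCompact_closedBall p₀ r).of_isClosed_subset hcl hsub)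

lemma rDual_convex {r : ℝ} {A : Set E} : Convex ℝ (rDual r A) :=
  convex_iInter₂ fun a _ => convex_closedBall a r

lemma rHull_convex {r : ℝ} {A : Set E} : Convex ℝ (rHull r A) :=
  convex_iInter₂ fun p _ => convex_closedBall p r

set_option maxHeartbeats 2000000 in
lemma key_support {r : ℝ} (hr : 0 < r) {A : Set E} (hA : A.Nonempty)
    (hRd : (rDual r A).Nonempty) (u : E) (hu : ‖u‖ = 1) :
    ∃ a ∈ rHull r A, rHull r A ⊆ closedBall (a + r • u) r := by
  have hKc : IsCompact (rHull r A) := rHull_isCompact hRd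
  have hKne : (rHull r A).Nonempty := hA.mono subset_rHull
  have hfc : Continuous fun x : E => (inner ℝ u x : ℝ) := continuous_const.inner continuous_id
  obtain ⟨a, haK, hmin⟩ := hKc.exists_isMinOn hKne hfc.continuousOn
  refine ⟨a, haK, fun b hbK => ?_⟩
  rw [mem_closedBall, dist_eq_norm]
  by_contra hcon
  push_neg at hcon
  -- hcon : r < ‖b - (a + r • u)‖
  have hid : b - (a + r • u) = (b - a) - r • u := by abel
  have hexp : ‖(b - a) - r • u‖ ^ 2
      = ‖b - a‖ ^ 2 - 2 * r * (inner ℝ u (b - a) : ℝ) + r ^ 2 := by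
    rw [norm_sub_sq_real, real_inner_smul_right, norm_smul, real_inner_comm]
    rw [Real.norm_eq_abs, abs_of_pos hr, hu]
    ring
  have hgt : r ^ 2 < ‖b - a‖ ^ 2 - 2 * r * (inner ℝ u (b - a) : ℝ) + r ^ 2 := by
    rw [← hexp, ← hid]
    have h0 : (0:ℝ) ≤ r := hr.le
    calc r ^ 2 < ‖b - (a + r • u)‖ ^ 2 := by
          apply pow_lt_pow_left₀ hcon h0 two_ne_zero
      _ = _ := rfl
  have hm' : (inner ℝ u (b - a) : ℝ) < ‖b - a‖ ^ 2 / (2 * r) := by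
    rw [lt_div_iff₀ (by positivity)]
    nlinarith
  have hba : b ≠ a := by
    rintro rfl
    have : ‖b - (b + r • u)‖ = r := by
      simp [norm_smul, Real.norm_eq_abs, abs_of_pos hr, hu]
    linarith [hcon.trans_eq this]
  set m : ℝ := ‖b - a‖ ^ 2 / (2 * r) with hm
  set w : E := (b - a) - m • u with hwdef
  have hba' : (0:ℝ) < ‖b - a‖ := by
    rw [norm_pos_iff]; exact sub_ne_zero_of_ne hba
  have huw : (inner ℝ u w : ℝ) < 0 := by
    rw [hwdef, inner_sub_right, real_inner_smul_right, real_inner_self_eq_norm_sq, hu]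
    simp only [one_pow, mul_one]
    linarith
  have hw0 : w ≠ 0 := by
    intro h
    rw [h] at huw
    simp at huw
  have hwpos : (0:ℝ) < ‖w‖ ^ 2 := pow_pos (norm_pos_iff.2 hw0) 2
  -- the function h
  set h : E → ℝ := fun p =>
    (r ^ 2 - ‖a - p‖ ^ 2) + ‖b - a‖ ^ 2 * (1 + (inner ℝ (a - p) u : ℝ) / r) with hhdef
  have hhc : Continuous h := by
    apply Continuous.add
    · exact continuous_const.sub ((continuous_const.sub continuous_id).norm.pow 2)
    · exact continuous_const.mul (continuous_const.add
        (((continuous_const.sub continuous_id).inner continuous_const).div_const r))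
  have hPc : IsCompact (rDual r A) := rDual_isCompact hA
  obtain ⟨p₀, hp₀P, hp₀min⟩ := hPc.exists_isMinOn hRd hhc.continuousOn
  -- nonnegativity facts for any p ∈ rDual
  have hfacts : ∀ p ∈ rDual r A, ‖a - p‖ ≤ r ∧ dist b p ≤ r := by
    intro p hp
    have hA' := mem_rDual_iff.1 hp
    constructor
    · have := mem_closedBall.1 ((mem_rHull_iff.1 haK) p hA')
      rwa [dist_eq_norm] at this
    · exact mem_closedBall.1 ((mem_rHull_iff.1 hbK) p hA')
  have hterm2 : ∀ p ∈ rDual r A, 0 ≤ 1 + (inner ℝ (a - p) u : ℝ) / r := by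
    intro p hp
    have h1 : |(inner ℝ (a - p) u : ℝ)| ≤ ‖a - p‖ := by
      have := abs_real_inner_le_norm (a - p) u
      rwa [hu, mul_one] at this
    have h2 : ‖a - p‖ ≤ r := (hfacts p hp).1
    have h3 : -r ≤ (inner ℝ (a - p) u : ℝ) := by
      have := (abs_le.1 h1).1; linarith
    have he : 1 + (inner ℝ (a - p) u : ℝ) / r = (r + inner ℝ (a - p) u) / r := by
      field_simp
    rw [he]
    exact div_nonneg (by linarith) hr.le
  have hηnonneg : ∀ p ∈ rDual r A, 0 ≤ h p := by
    intro p hp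
    have t1 : 0 ≤ r ^ 2 - ‖a - p‖ ^ 2 := by
      nlinarith [(hfacts p hp).1, norm_nonneg (a - p)]
    have t2 : 0 ≤ ‖b - a‖ ^ 2 * (1 + (inner ℝ (a - p) u : ℝ) / r) :=
      mul_nonneg (by positivity) (hterm2 p hp)
    simp only [hhdef]
    linarith
  have hη : 0 < h p₀ := by
    rcases lt_or_eq_of_le (hηnonneg p₀ hp₀P) with h' | h'
    · exact h'
    exfalso
    have t1 : 0 ≤ r ^ 2 - ‖a - p₀‖ ^ 2 := by
      nlinarith [(hfacts p₀ hp₀P).1, norm_nonneg (a - p₀)]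
    have t2 : 0 ≤ ‖b - a‖ ^ 2 * (1 + (inner ℝ (a - p₀) u : ℝ) / r) :=
      mul_nonneg (by positivity) (hterm2 p₀ hp₀P)
    have hsum : (r ^ 2 - ‖a - p₀‖ ^ 2) + ‖b - a‖ ^ 2 * (1 + (inner ℝ (a - p₀) u : ℝ) / r) = 0 := by
      simp only [hhdef] at h'
      linarith
    have e1 : r ^ 2 - ‖a - p₀‖ ^ 2 = 0 := by linarith
    have e2 : ‖b - a‖ ^ 2 * (1 + (inner ℝ (a - p₀) u : ℝ) / r) = 0 := by linarith
    have e2' : 1 + (inner ℝ (a - p₀) u : ℝ) / r = 0 := by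
      rcases mul_eq_zero.1 e2 with hc | hc
      · exact absurd hc (by positivity)
      · exact hc
    have e2'' : (inner ℝ (a - p₀) u : ℝ) = -r := by
      have hdiv : (inner ℝ (a - p₀) u : ℝ) / r = -1 := by linarith
      have := (div_eq_iff hr.ne').1 hdiv
      linarith
    have hz : ‖(a - p₀) + r • u‖ ^ 2 = 0 := by
      rw [norm_add_sq_real, real_inner_smul_right, norm_smul, Real.norm_eq_abs,
        abs_of_pos hr, hu, e2'']
      nlinarith [e1]
    have hz' : (a - p₀) + r • u = 0 := by
      have := (pow_eq_zero_iff (two_ne_zero)).1 hz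
      rwa [norm_eq_zero] at this
    have hp0eq : p₀ = a + r • u := by
      have h4 : (a + r • u) - p₀ = 0 := by rw [← hz']; abel
      exact (sub_eq_zero.1 h4).symm
    have hbp := (hfacts p₀ hp₀P).2
    rw [hp0eq, dist_eq_norm] at hbp
    linarith
  set s : ℝ := min (1 / 2) (h p₀ / (2 * ‖w‖ ^ 2)) with hsdef
  have hs0 : 0 < s := lt_min (by norm_num) (by positivity)
  have hs12 : s ≤ 1 / 2 := min_le_left _ _
  have hsw : s * ‖w‖ ^ 2 ≤ h p₀ / 2 := by
    have h1 := min_le_right (1 / 2) (h p₀ / (2 * ‖w‖ ^ 2))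
    have h2 : (h p₀ / (2 * ‖w‖ ^ 2)) * ‖w‖ ^ 2 = h p₀ / 2 := by
      field_simp
    nlinarith [hwpos]
  have hxK : a + s • w ∈ rHull r A := by
    rw [mem_rHull_iff]
    intro p hA'
    have hp : p ∈ rDual r A := mem_rDual_iff.2 hA'
    have hhp : h p₀ ≤ h p := hp₀min hp
    have hbp : ‖b - p‖ ≤ r := by rw [← dist_eq_norm]; exact (hfacts p hp).2
    have hap : ‖a - p‖ ≤ r := (hfacts p hp).1
    rw [mem_closedBall, dist_eq_norm]
    have hxp : a + s • w - p = (a - p) + s • w := by abel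
    have hsq : ‖(a - p) + s • w‖ ^ 2
        = ‖a - p‖ ^ 2 + 2 * s * (inner ℝ (a - p) w : ℝ) + s ^ 2 * ‖w‖ ^ 2 := by
      rw [norm_add_sq_real, real_inner_smul_right, norm_smul, Real.norm_eq_abs, abs_of_pos hs0]
      ring
    have hinw : (inner ℝ (a - p) w : ℝ)
        = inner ℝ (a - p) (b - a) - m * inner ℝ (a - p) u := by
      rw [hwdef, inner_sub_right, real_inner_smul_right]
    have hinab : 2 * (inner ℝ (a - p) (b - a) : ℝ) = ‖b - p‖ ^ 2 - ‖a - p‖ ^ 2 - ‖b - a‖ ^ 2 := by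
      have hbpe : b - p = (a - p) + (b - a) := by abel
      rw [hbpe, norm_add_sq_real]
      ring
    have hest : 2 * (inner ℝ (a - p) w : ℝ)
        ≤ (r ^ 2 - ‖a - p‖ ^ 2) - ‖b - a‖ ^ 2 * (1 + (inner ℝ (a - p) u : ℝ) / r) := by
      have hb2 : ‖b - p‖ ^ 2 ≤ r ^ 2 := by nlinarith [norm_nonneg (b - p)]
      have hm2 : 2 * m = ‖b - a‖ ^ 2 / r := by
        rw [hm]; field_simp
      have he1 : 2 * (inner ℝ (a - p) w : ℝ)
          = (‖b - p‖ ^ 2 - ‖a - p‖ ^ 2 - ‖b - a‖ ^ 2) - (2 * m) * inner ℝ (a - p) u := by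
        rw [hinw]; linarith [hinab]
      rw [he1, hm2]
      have he2 : (r ^ 2 - ‖a - p‖ ^ 2) - ‖b - a‖ ^ 2 * (1 + (inner ℝ (a - p) u : ℝ) / r)
          - ((‖b - p‖ ^ 2 - ‖a - p‖ ^ 2 - ‖b - a‖ ^ 2)
            - (‖b - a‖ ^ 2 / r) * inner ℝ (a - p) u) = r ^ 2 - ‖b - p‖ ^ 2 := by
        field_simp
        ring
      linarith
    have hδ2 : 0 ≤ r ^ 2 - ‖a - p‖ ^ 2 := by nlinarith [norm_nonneg (a - p)]
    have hg : 0 ≤ ‖b - a‖ ^ 2 * (1 + (inner ℝ (a - p) u : ℝ) / r) :=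
      mul_nonneg (by positivity) (hterm2 p hp)
    have hhpe : h p = (r ^ 2 - ‖a - p‖ ^ 2) + ‖b - a‖ ^ 2 * (1 + (inner ℝ (a - p) u : ℝ) / r) := by
      simp only [hhdef]
    have hfin : ‖(a - p) + s • w‖ ^ 2 ≤ r ^ 2 := by
      have k1 : s * (2 * (inner ℝ (a - p) w : ℝ))
          ≤ s * ((r ^ 2 - ‖a - p‖ ^ 2) - ‖b - a‖ ^ 2 * (1 + (inner ℝ (a - p) u : ℝ) / r)) :=
        mul_le_mul_of_nonneg_left hest hs0.le
      have k2 : s * (s * ‖w‖ ^ 2) ≤ s * (h p₀ / 2) := mul_le_mul_of_nonneg_left hsw hs0.le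
      have k3 : s * h p₀ ≤ s * h p := mul_le_mul_of_nonneg_left hhp hs0.le
      have k4 : 0 ≤ (1 - 3 / 2 * s) * (r ^ 2 - ‖a - p‖ ^ 2) :=
        mul_nonneg (by linarith) hδ2
      have k5 : 0 ≤ s * (‖b - a‖ ^ 2 * (1 + (inner ℝ (a - p) u : ℝ) / r)) :=
        mul_nonneg hs0.le hg
      rw [hhpe] at k3
      nlinarith [hsq, k1, k2, k3, k4, k5]
    have : ‖(a - p) + s • w‖ ≤ r := by
      nlinarith [norm_nonneg ((a - p) + s • w), hfin, hr]
    rw [hxp]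
    exact this
  have hlt : (inner ℝ u (a + s • w) : ℝ) < inner ℝ u a := by
    rw [inner_add_right, real_inner_smul_right]
    nlinarith [huw, hs0]
  have := hmin hxK
  simp only [Set.mem_setOf_eq] at this
  exact absurd this (not_le.2 hlt)

lemma exists_unit_orthogonal (hd : 2 ≤ d) (z : E) :
    ∃ w : E, ‖w‖ = 1 ∧ (inner ℝ z w : ℝ) = 0 := by
  set T := (Submodule.span ℝ {z})ᗮ with hT
  have hsp : Module.finrank ℝ (Submodule.span ℝ {z} : Submodule ℝ E) ≤ 1 := by
    rcases eq_or_ne z 0 with rfl | hz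
    · rw [Submodule.span_zero_singleton]
      simp
    · rw [finrank_span_singleton hz]
  have hfr : 0 < Module.finrank ℝ T := by
    have h5 := Submodule.finrank_add_finrank_orthogonal (Submodule.span ℝ {z} : Submodule ℝ E)
    rw [finrank_euclideanSpace_fin] at h5
    rw [hT]
    omega
  have : Nontrivial T := Module.finrank_pos_iff.1 hfr
  obtain ⟨w', hw'⟩ := exists_ne (0 : T)
  have hw0 : (w' : E) ≠ 0 := fun h => hw' (Subtype.ext h)
  refine ⟨‖(w' : E)‖⁻¹ • (w' : E), ?_, ?_⟩
  · rw [norm_smul, Real.norm_eq_abs, abs_inv, abs_of_nonneg (norm_nonneg _)]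
    exact inv_mul_cancel₀ (norm_ne_zero_iff.2 hw0)
  · rw [real_inner_smul_right]
    have : (inner ℝ z (w' : E) : ℝ) = 0 := by
      have hmem := w'.2
      rw [Submodule.mem_orthogonal] at hmem
      exact hmem z (Submodule.mem_span_singleton_self z)
    rw [this, mul_zero]


end AuxLemmas

theorem stmt_1 {d : ℕ} (hd : 2 ≤ d) (r : ℝ) (hr : 0 < r)
    (A : Set (EuclideanSpace ℝ (Fin d))) (hA : A.Nonempty) (hAc : IsCompact A)
    (hcr0 : 0 < circumradius A) (hcr : circumradius A ≤ r) :
    rDual r A - rHull r A = closedBall (0 : EuclideanSpace ℝ (Fin d)) r := by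
  have hRd : (rDual r A).Nonempty := rDual_nonempty hr hA hcr0 hcr
  apply Set.Subset.antisymm
  · intro x hx
    rw [Set.mem_sub] at hx
    obtain ⟨p, hp, y, hy, rfl⟩ := hx
    have hyp : y ∈ closedBall p r := (mem_rHull_iff.1 hy) p (mem_rDual_iff.1 hp)
    rw [mem_closedBall, dist_eq_norm] at hyp ⊢
    rw [sub_zero, ← norm_neg]
    simpa [neg_sub] using hyp
  · -- sphere points are in the difference
    have hsph : ∀ z' : EuclideanSpace ℝ (Fin d), ‖z'‖ = r → z' ∈ rDual r A - rHull r A := by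
      intro z' hz'
      have hz'0 : z' ≠ 0 := by
        intro h; rw [h, norm_zero] at hz'; linarith
      set u := r⁻¹ • z' with hu'
      have hu : ‖u‖ = 1 := by
        rw [hu', norm_smul, Real.norm_eq_abs, abs_of_pos (inv_pos.2 hr), hz']
        field_simp
      obtain ⟨a, haK, hsub⟩ := key_support hr hA hRd u hu
      have hru : r • u = z' := by
        rw [hu', smul_smul, mul_inv_cancel₀ hr.ne', one_smul]
      have haz : a + z' ∈ rDual r A := by
        rw [mem_rDual_iff]
        intro x hx
        have := hsub (subset_rHull hx)
        rwa [hru] at this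
      rw [Set.mem_sub]
      exact ⟨a + z', haz, a, haK, by abel⟩
    intro z hz
    rw [mem_closedBall, dist_zero_right] at hz
    obtain ⟨w, hw1, hwz⟩ := exists_unit_orthogonal hd z
    set t := Real.sqrt (r ^ 2 - ‖z‖ ^ 2) with htdef
    have hnn : 0 ≤ r ^ 2 - ‖z‖ ^ 2 := by nlinarith [norm_nonneg z]
    have ht2 : t ^ 2 = r ^ 2 - ‖z‖ ^ 2 := Real.sq_sqrt hnn
    set v := t • w with hvdef
    have hzv : (inner ℝ z v : ℝ) = 0 := by
      rw [hvdef, real_inner_smul_right, hwz, mul_zero]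
    have hvn : ‖v‖ ^ 2 = r ^ 2 - ‖z‖ ^ 2 := by
      rw [hvdef, norm_smul, Real.norm_eq_abs, mul_pow, sq_abs, ht2, hw1]
      ring
    have h1 : ‖z + v‖ = r := by
      have : ‖z + v‖ ^ 2 = r ^ 2 := by
        rw [norm_add_sq_real, hzv, hvn]; ring
      have := congrArg Real.sqrt this
      rwa [Real.sqrt_sq (norm_nonneg _), Real.sqrt_sq hr.le] at this
    have h2 : ‖z - v‖ = r := by
      have : ‖z - v‖ ^ 2 = r ^ 2 := by
        rw [norm_sub_sq_real, hzv, hvn]; ring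
      have := congrArg Real.sqrt this
      rwa [Real.sqrt_sq (norm_nonneg _), Real.sqrt_sq hr.le] at this
    have hconv : Convex ℝ (rDual r A - rHull r A) := rDual_convex.sub rHull_convex
    have hcomb := hconv (hsph _ h1) (hsph _ h2)
      (by norm_num : (0:ℝ) ≤ 1/2) (by norm_num : (0:ℝ) ≤ 1/2) (by norm_num)
    have : (1/2 : ℝ) • (z + v) + (1/2 : ℝ) • (z - v) = z := by
      rw [smul_add, smul_sub]
      module
    rwa [this] at hcomb
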